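/- Let A be a real d×d matrix, G a real d×m matrix, and b, f vectors in ℝᵈ, and let C be the (2d+2)×(2d+2) block matrix with block rows [A, GGᵀ, b, f], [0, −Aᵀ, 0, 0], [0, 0, 0, 1], [0, 0, 0, 0] (blocks of sizes d, d, 1, 1). Then for every h ≥ 0, the d×1 block of exp(hC) in block position (1,4) equals ∫₀ʰ exp(A(h−s)) (f + s·b) ds, and the d×d block of exp(hC) in block position (1,1) equals exp(Ah). -/

import Mathlib

open Matrix MeasureTheory intervalIntegral NormedSpace
open scoped Matrix.Norms.L2Operator

/-! Van Loan's formula: for a block upper triangular matrix,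
`exp (t • fromBlocks X Y 0 Z)` is
`fromBlocks (exp (t • X)) (∫₀ᵗ exp ((t - s) • X) * Y * exp (s • Z) ds) 0 (exp (t • Z))`,
since the right side solves `M' = fromBlocks X Y 0 Z * M`, `M 0 = 1` (variation of constants in
the top right block), and this linear ODE has a unique solution. Apply it to `C`, whose diagonal
blocks are `P = fromBlocks A (G * Gᵀ) 0 (-Aᵀ)` and the nilpotent `N = fromBlocks 0 1 0 0`, and
then to `P`. As `exp (s • N) = fromBlocks 1 (s • 1) 0 1`, the relevant column of the integrand
is `exp ((h - s) • A) *ᵥ (f + s • b)`. -/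

theorem eq_exp_smul_of_hasDerivAt {𝔸 : Type*} [NormedRing 𝔸] [NormedAlgebra ℝ 𝔸]
    [CompleteSpace 𝔸] {C : 𝔸} {M : ℝ → 𝔸} (hM₀ : M 0 = 1)
    (hM : ∀ t, HasDerivAt M (C * M t) t) (t : ℝ) :
    M t = exp (t • C) := by
  have hball : ∀ x : 𝔸, x ∈ Metric.eball (0 : 𝔸) (expSeries ℝ 𝔸).radius := fun x => by
    simp [expSeries_radius_eq_top]
  -- `exp (-u • C) * M u` has zero derivative, because `C` commutes with `exp (-u • C)`.
  have hconst : ∀ u : ℝ, HasDerivAt (fun v => exp ((-v) • C) * M v) 0 u := by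
    intro u
    have hexp : HasDerivAt (fun v : ℝ => exp ((-v) • C)) (-(C * exp ((-u) • C))) u := by
      simpa [Function.comp_def] using
        (hasDerivAt_exp_smul_const' (𝕂 := ℝ) C (-u)).scomp u (hasDerivAt_neg u)
    convert hexp.fun_mul (hM u) using 1
    rw [((Commute.refl C).smul_right (-u)).exp_right, neg_mul, mul_assoc]
    abel
  have hleft : exp ((-t) • C) * M t = 1 := by
    simpa [hM₀] using is_const_of_deriv_eq_zero (fun v => (hconst v).differentiableAt)
      (fun v => (hconst v).deriv) t 0
  have hright : exp (t • C) * exp ((-t) • C) = 1 := by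
    rw [← exp_add_of_commute_of_mem_ball (((Commute.refl C).smul_left t).smul_right (-t))
      (hball _) (hball _)]
    simp
  calc M t = exp (t • C) * (exp ((-t) • C) * M t) := by rw [← mul_assoc, hright, one_mul]
    _ = exp (t • C) := by rw [hleft, mul_one]

namespace Matrix

variable {l m n p q : Type*} [Fintype l] [Fintype m] [Fintype n] [Fintype p] [Fintype q]

theorem hasDerivAt_iff_forall_entry [DecidableEq n] {F : ℝ → Matrix m n ℝ} {F' : Matrix m n ℝ}
    {t : ℝ} :
    HasDerivAt F F' t ↔ ∀ i j, HasDerivAt (fun u => F u i j) (F' i j) t := by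
  simp only [hasDerivAt_iff_tendsto_slope]
  exact tendsto_pi_nhds.trans (forall_congr' fun i => tendsto_pi_nhds)

theorem _root_.HasDerivAt.matrix_mul [DecidableEq n] [DecidableEq p] {X : ℝ → Matrix m n ℝ}
    {Y : ℝ → Matrix n p ℝ} {X' : Matrix m n ℝ} {Y' : Matrix n p ℝ} {t : ℝ}
    (hX : HasDerivAt X X' t) (hY : HasDerivAt Y Y' t) :
    HasDerivAt (fun u => X u * Y u) (X' * Y t + X t * Y') t := by
  rw [hasDerivAt_iff_forall_entry] at hX hY ⊢
  intro i j
  simpa [mul_apply, Finset.sum_add_distrib] using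
    HasDerivAt.fun_sum (u := Finset.univ) fun k _ => (hX i k).mul (hY k j)

theorem _root_.HasDerivAt.matrix_fromBlocks [DecidableEq p] [DecidableEq q]
    {W : ℝ → Matrix m p ℝ} {X : ℝ → Matrix m q ℝ} {Y : ℝ → Matrix n p ℝ} {Z : ℝ → Matrix n q ℝ}
    {W' : Matrix m p ℝ} {X' : Matrix m q ℝ} {Y' : Matrix n p ℝ} {Z' : Matrix n q ℝ} {t : ℝ}
    (hW : HasDerivAt W W' t) (hX : HasDerivAt X X' t)
    (hY : HasDerivAt Y Y' t) (hZ : HasDerivAt Z Z' t) :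
    HasDerivAt (fun u => fromBlocks (W u) (X u) (Y u) (Z u)) (fromBlocks W' X' Y' Z') t := by
  rw [hasDerivAt_iff_forall_entry] at hW hX hY hZ ⊢
  rintro (i | i) (j | j)
  exacts [hW i j, hX i j, hY i j, hZ i j]

theorem intervalIntegral_apply [DecidableEq n] {F : ℝ → Matrix m n ℝ} {a b : ℝ}
    (hF : IntervalIntegrable F volume a b) (i : m) (j : n) :
    (∫ s in a..b, F s) i j = ∫ s in a..b, F s i j :=
  ((entryLinearMap ℝ ℝ i j).toContinuousLinearMap.intervalIntegral_comp_comm hF).symm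

theorem mul_intervalIntegral [DecidableEq n] (M : Matrix l m ℝ) {F : ℝ → Matrix m n ℝ} {a b : ℝ}
    (hF : IntervalIntegrable F volume a b) :
    M * ∫ s in a..b, F s = ∫ s in a..b, M * F s :=
  ((mulLeftLinearMap n ℝ M).toContinuousLinearMap.intervalIntegral_comp_comm hF).symm

theorem continuous_exp_smul [DecidableEq n] (X : Matrix n n ℝ) :
    Continuous fun t : ℝ => exp (t • X) :=
  continuous_iff_continuousAt.2 fun t => (hasDerivAt_exp_smul_const' X t).continuousAt

theorem exp_smul_mul_exp_smul [DecidableEq n] (X : Matrix n n ℝ) (s t : ℝ) :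
    exp (s • X) * exp (t • X) = exp ((s + t) • X) := by
  rw [add_smul, Matrix.exp_add_of_commute _ _ (((Commute.refl X).smul_left s).smul_right t)]

theorem exp_smul_fromBlocks_zero₂₁ [DecidableEq n] [DecidableEq p]
    (X : Matrix n n ℝ) (Y : Matrix n p ℝ) (Z : Matrix p p ℝ) (t : ℝ) :
    exp (t • fromBlocks X Y 0 Z) =
      fromBlocks (exp (t • X)) (∫ s in 0..t, exp ((t - s) • X) * Y * exp (s • Z)) 0
        (exp (t • Z)) := by
  set K : ℝ → Matrix n p ℝ := fun s => exp ((-s) • X) * Y * exp (s • Z)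
  have hK : Continuous K :=
    (((continuous_exp_smul X).comp continuous_neg).matrix_mul continuous_const).matrix_mul
      (continuous_exp_smul Z)
  have hpull : ∀ u, ∫ s in 0..u, exp ((u - s) • X) * Y * exp (s • Z) =
      exp (u • X) * ∫ s in 0..u, K s := by
    intro u
    simp only [mul_intervalIntegral _ (hK.intervalIntegrable 0 u), K, ← Matrix.mul_assoc,
      exp_smul_mul_exp_smul, sub_eq_add_neg]
  have hderiv : ∀ u, HasDerivAt (fun v => fromBlocks (exp (v • X))
      (exp (v • X) * ∫ s in 0..v, K s) 0 (exp (v • Z)))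
      (fromBlocks X Y 0 Z * fromBlocks (exp (u • X)) (exp (u • X) * ∫ s in 0..u, K s) 0
        (exp (u • Z))) u := by
    intro u
    have hE := hasDerivAt_exp_smul_const' (𝕂 := ℝ) X u
    have hQ := hE.matrix_mul (integral_hasDerivAt_right (hK.intervalIntegrable 0 u)
      hK.aestronglyMeasurable.stronglyMeasurableAtFilter hK.continuousAt)
    convert hE.matrix_fromBlocks hQ (hasDerivAt_const u 0)
      (hasDerivAt_exp_smul_const' (𝕂 := ℝ) Z u) using 1
    have hcancel : exp (u • X) * K u = Y * exp (u • Z) := by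
      simp only [K, ← Matrix.mul_assoc, exp_smul_mul_exp_smul, add_neg_cancel, zero_smul,
        exp_zero, Matrix.one_mul]
    simp [fromBlocks_multiply, hcancel, Matrix.mul_assoc]
  rw [hpull, ← eq_exp_smul_of_hasDerivAt (by simp [fromBlocks_one]) hderiv t]

theorem exp_smul_fromBlocks_zero_zero_zero [DecidableEq n] [DecidableEq p]
    (Y : Matrix n p ℝ) (t : ℝ) :
    exp (t • fromBlocks 0 Y 0 0) = (fromBlocks 1 (t • Y) 0 1 : Matrix (n ⊕ p) (n ⊕ p) ℝ) := by
  simp [exp_smul_fromBlocks_zero₂₁]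

end Matrix

theorem scheme1_exponential_blocks_general (d m : ℕ)
    (A : Matrix (Fin d) (Fin d) ℝ) (G : Matrix (Fin d) (Fin m) ℝ) (b f : Fin d → ℝ)
    (C : Matrix ((Fin d ⊕ Fin d) ⊕ (Fin 1 ⊕ Fin 1)) ((Fin d ⊕ Fin d) ⊕ (Fin 1 ⊕ Fin 1)) ℝ)
    (hC : C = Matrix.fromBlocks
      (Matrix.fromBlocks A (G * Gᵀ) 0 (-Aᵀ))
      (Matrix.fromBlocks (Matrix.of fun i (_ : Fin 1) => b i)
        (Matrix.of fun i (_ : Fin 1) => f i) 0 0)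
      0
      (Matrix.fromBlocks 0 1 0 0))
    (h : ℝ) :
    (NormedSpace.exp (h • C)).toBlocks₁₂.toBlocks₁₂ =
      (Matrix.of fun i (_ : Fin 1) =>
        (∫ s in (0:ℝ)..h, (NormedSpace.exp ((h - s) • A)).mulVec (f + s • b)) i) ∧
    (NormedSpace.exp (h • C)).toBlocks₁₁.toBlocks₁₁ = NormedSpace.exp (h • A) := by
  set P : Matrix (Fin d ⊕ Fin d) (Fin d ⊕ Fin d) ℝ := fromBlocks A (G * Gᵀ) 0 (-Aᵀ)
  set B : Matrix (Fin d ⊕ Fin d) (Fin 1 ⊕ Fin 1) ℝ :=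
    fromBlocks (of fun i (_ : Fin 1) => b i) (of fun i (_ : Fin 1) => f i) 0 0
  set N : Matrix (Fin 1 ⊕ Fin 1) (Fin 1 ⊕ Fin 1) ℝ := fromBlocks 0 1 0 0
  have hintegrand : ∀ s : ℝ, (exp ((h - s) • P) * B * exp (s • N)).toBlocks₁₂ =
      replicateCol (Fin 1) (exp ((h - s) • A) *ᵥ (f + s • b)) := by
    intro s
    rw [exp_smul_fromBlocks_zero_zero_zero, exp_smul_fromBlocks_zero₂₁]
    simp only [B, fromBlocks_multiply, Matrix.mul_zero, Matrix.zero_mul, Matrix.mul_one,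
      Matrix.mul_smul, smul_zero, add_zero, toBlocks_fromBlocks₁₂, replicateCol_mulVec,
      replicateCol_add, replicateCol_smul, Matrix.mul_add]
    exact add_comm _ _
  subst hC
  rw [exp_smul_fromBlocks_zero₂₁, toBlocks_fromBlocks₁₂, toBlocks_fromBlocks₁₁,
    exp_smul_fromBlocks_zero₂₁, toBlocks_fromBlocks₁₁]
  refine ⟨?_, rfl⟩
  have hF : Continuous fun s => exp ((h - s) • P) * B * exp (s • N) :=
    (((continuous_exp_smul P).comp (continuous_const.sub continuous_id)).matrix_mul
      continuous_const).matrix_mul (continuous_exp_smul N)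
  have hv : Continuous fun s : ℝ => exp ((h - s) • A) *ᵥ (f + s • b) :=
    ((continuous_exp_smul A).comp (continuous_const.sub continuous_id)).matrix_mulVec
      (continuous_const.add (continuous_id.smul continuous_const))
  ext i j
  rw [toBlocks₁₂, of_apply, intervalIntegral_apply (hF.intervalIntegrable 0 h), of_apply]
  refine (integral_congr fun s _ => ?_).trans
    ((ContinuousLinearMap.proj (R := ℝ) (φ := fun _ : Fin d => ℝ) i).intervalIntegral_comp_comm
      (hv.intervalIntegrable 0 h))
  exact congrFun (congrFun (hintegrand s) i) j

/-- The identity `φ_β = D₁₄` of the weak Local Linearization scheme (Scheme1): if `C` is the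
`(2d+2) × (2d+2)` block matrix with block rows `[A, GGᵀ, b, f]`, `[0, −Aᵀ, 0, 0]`,
`[0, 0, 0, 1]`, `[0, 0, 0, 0]` (blocks of sizes `d, d, 1, 1`), then for every `h ≥ 0` the
`d × 1` block of `exp (h C)` in block position `(1,4)` equals
`∫₀ʰ exp (A(h−s)) (f + s b) ds`, and the `d × d` block in position `(1,1)` equals
`exp (A h)`. -/
theorem scheme1_exponential_blocks (d m : ℕ)
    (A : Matrix (Fin d) (Fin d) ℝ) (G : Matrix (Fin d) (Fin m) ℝ) (b f : Fin d → ℝ)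
    (C : Matrix ((Fin d ⊕ Fin d) ⊕ (Fin 1 ⊕ Fin 1)) ((Fin d ⊕ Fin d) ⊕ (Fin 1 ⊕ Fin 1)) ℝ)
    (hC : C = Matrix.fromBlocks
      (Matrix.fromBlocks A (G * Gᵀ) 0 (-Aᵀ))
      (Matrix.fromBlocks (Matrix.of fun i (_ : Fin 1) => b i)
        (Matrix.of fun i (_ : Fin 1) => f i) 0 0)
      0
      (Matrix.fromBlocks 0 1 0 0))
    (h : ℝ) (hh : 0 ≤ h) :
    (NormedSpace.exp (h • C)).toBlocks₁₂.toBlocks₁₂ =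
      (Matrix.of fun i (_ : Fin 1) =>
        (∫ s in (0:ℝ)..h, (NormedSpace.exp ((h - s) • A)).mulVec (f + s • b)) i) ∧
    (NormedSpace.exp (h • C)).toBlocks₁₁.toBlocks₁₁ = NormedSpace.exp (h • A) :=
  scheme1_exponential_blocks_general d m A G b f C hC h
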